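/- arXiv:1905.10242 — 2 statements merged into one kernel-verified Lean document; each statement's English description precedes it below -/
import Mathlib

section
/- Any successful violation of ACS call-stack integrity yields a PAC collision: the winning condition of the ACS game implies H(ptr_jumper, auth_correct ∥ ptr_correct) = H(ptr_jumper, auth_adv ∥ ptr_adv) with (auth_correct, ptr_correct) ≠ (auth_adv, ptr_adv). Consequently P[win ACS game] ≤ P[win PAC-collision game] ≤ 2^{-b} + 2·Adv_Distinguish. -/
/-- Any successful violation of ACS call-stack integrity yields a PAC collision.
Here `H : Ptr × (Tok × Ptr) → Tok` is the authentication-token function with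
`Tok = Fin (2^b)`, and the adversary's output (as a function of `H`) is
`(ptr_jumper, ptr_correct, auth_correct, ptr_adv, auth_adv)`.  The ACS winning
condition (the substituted masked authenticated return address differs from the
correct one, yet both authenticate to the same value) implies a collision of `H`
at equal first argument and distinct second arguments; consequently, given that
the PAC-collision game is won with probability at most `2⁻ᵇ + 2·AdvD`, the ACS
game is won with probability at most `2⁻ᵇ + 2·AdvD`. -/
theorem acs_win_implies_pac_collision (Ptr : Type) [Fintype Ptr] (b : ℕ) (AdvD : ℝ)
    (out : (Ptr × (Fin (2 ^ b) × Ptr) → Fin (2 ^ b)) →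
            Ptr × Ptr × Fin (2 ^ b) × Ptr × Fin (2 ^ b))
    (hColl : (Nat.card {H : Ptr × (Fin (2 ^ b) × Ptr) → Fin (2 ^ b) //
          ∃ x y y', y ≠ y' ∧ H (x, y) = H (x, y')} : ℝ) /
        (Nat.card (Ptr × (Fin (2 ^ b) × Ptr) → Fin (2 ^ b)) : ℝ) ≤
        ((2 : ℝ) ^ b)⁻¹ + 2 * AdvD) :
    (∀ H : Ptr × (Fin (2 ^ b) × Ptr) → Fin (2 ^ b),
      (match out H with
       | (pj, pc, ac, pa, aa) =>
          ¬(ac = aa ∧ pc = pa) ∧ H (pj, (ac, pc)) = H (pj, (aa, pa))) →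
      ∃ x y y', y ≠ y' ∧ H (x, y) = H (x, y')) ∧
    (Nat.card {H : Ptr × (Fin (2 ^ b) × Ptr) → Fin (2 ^ b) //
        match out H with
        | (pj, pc, ac, pa, aa) =>
            ¬(ac = aa ∧ pc = pa) ∧ H (pj, (ac, pc)) = H (pj, (aa, pa))} : ℝ) /
      (Nat.card (Ptr × (Fin (2 ^ b) × Ptr) → Fin (2 ^ b)) : ℝ) ≤
      ((2 : ℝ) ^ b)⁻¹ + 2 * AdvD := by
  have key : ∀ H : Ptr × (Fin (2 ^ b) × Ptr) → Fin (2 ^ b),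
      (match out H with
       | (pj, pc, ac, pa, aa) =>
          ¬(ac = aa ∧ pc = pa) ∧ H (pj, (ac, pc)) = H (pj, (aa, pa))) →
      ∃ x y y', y ≠ y' ∧ H (x, y) = H (x, y') := by
    intro H h
    rcases hout : out H with ⟨pj, pc, ac, pa, aa⟩
    rw [hout] at h
    obtain ⟨hne, heq⟩ := h
    exact ⟨pj, (ac, pc), (aa, pa), fun h => hne ⟨congrArg Prod.fst h,
      congrArg Prod.snd h⟩, heq⟩
  refine ⟨key, le_trans (div_le_div_of_nonneg_right ?_ ?_) hColl⟩
  · let inj : {H : Ptr × (Fin (2 ^ b) × Ptr) → Fin (2 ^ b) //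
        match out H with
        | (pj, pc, ac, pa, aa) =>
            ¬(ac = aa ∧ pc = pa) ∧ H (pj, (ac, pc)) = H (pj, (aa, pa))} →
        {H : Ptr × (Fin (2 ^ b) × Ptr) → Fin (2 ^ b) //
          ∃ x y y', y ≠ y' ∧ H (x, y) = H (x, y')} :=
      fun H => ⟨H.1, key H.1 H.2⟩
    exact_mod_cast Nat.card_le_card_of_injective inj
      (by
        intro a b h
        have h1 : (inj a).val = (inj b).val := congrArg Subtype.val h
        exact Subtype.ext h1)
  · have : 0 < Nat.card (Ptr × (Fin (2 ^ b) × Ptr) → Fin (2 ^ b)) := Nat.card_pos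
    exact_mod_cast this.le
end

section
/- Under masking with a uniformly random function H, an adversary that observes masked tokens T(x_i, y_i) = H(x_i,y_i) ⊕ H(0,y_i) for q adaptively chosen pairs with x_i ≠ 0 and all y_i distinct, and then outputs (x̂, ŷ, ŷ') with ŷ ≠ ŷ', satisfies P[H(x̂,ŷ) = H(x̂,ŷ')] = 2^{-b} exactly, regardless of its strategy. -/
namespace MaskedAux

variable {X Y : Type} {b : ℕ} (x₀ : X)
  (A : (X × Y → (Fin b → ZMod 2)) → X × Y × Y)

/-- The adversary's output given the hash function. -/
def f (H : X × Y → Fin b → ZMod 2) : X × Y × Y :=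
  A (fun p => H p + H (x₀, p.2))

/-- The collision event. -/
def P (H : X × Y → Fin b → ZMod 2) : Prop :=
  H ((f x₀ A H).1, (f x₀ A H).2.1) = H ((f x₀ A H).1, (f x₀ A H).2.2)

lemma add_self (v : Fin b → ZMod 2) : v + v = 0 := by
  funext i
  have : ∀ a : ZMod 2, a + a = 0 := by decide
  exact this (v i)

lemma h2 (a c : Fin b → ZMod 2) : a + c + c = a := by
  rw [add_assoc, add_self, add_zero]

lemma h3 (a v : Fin b → ZMod 2) : a + v + a = v := by
  rw [add_comm a v]; exact h2 v a

lemma f_shift (H : X × Y → Fin b → ZMod 2) (δ : Y → Fin b → ZMod 2) :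
    f x₀ A (fun p => H p + δ p.2) = f x₀ A H := by
  unfold f
  congr 1
  funext p
  have : H p + δ p.2 + (H (x₀, p.2) + δ p.2)
      = H p + H (x₀, p.2) + (δ p.2 + δ p.2) := by ring
  rw [this, add_self, add_zero]

variable [DecidableEq Y]

/-- The key bijection: a hash function corresponds to a collision-satisfying
hash function together with the "defect" value. -/
def e (hdist : ∀ T, (A T).2.1 ≠ (A T).2.2) :
    (X × Y → Fin b → ZMod 2) ≃ {H : X × Y → Fin b → ZMod 2 // P x₀ A H} × (Fin b → ZMod 2) where
  toFun H :=
    (⟨fun p => H p + (if p.2 = (f x₀ A H).2.1 then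
        (H ((f x₀ A H).1, (f x₀ A H).2.1) + H ((f x₀ A H).1, (f x₀ A H).2.2)) else 0), by
      set v := H ((f x₀ A H).1, (f x₀ A H).2.1) + H ((f x₀ A H).1, (f x₀ A H).2.2) with hv
      have hfH' : f x₀ A (fun p => H p + (if p.2 = (f x₀ A H).2.1 then v else 0))
          = f x₀ A H := f_shift x₀ A H (fun y => if y = (f x₀ A H).2.1 then v else 0)
      have hne : (f x₀ A H).2.1 ≠ (f x₀ A H).2.2 := hdist _
      unfold P
      rw [hfH']
      show H ((f x₀ A H).1, (f x₀ A H).2.1)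
            + (if (f x₀ A H).2.1 = (f x₀ A H).2.1 then v else 0)
          = H ((f x₀ A H).1, (f x₀ A H).2.2)
            + (if (f x₀ A H).2.2 = (f x₀ A H).2.1 then v else 0)
      rw [if_pos rfl, if_neg (Ne.symm hne), add_zero, hv, ← add_assoc, add_self, zero_add]⟩,
     H ((f x₀ A H).1, (f x₀ A H).2.1) + H ((f x₀ A H).1, (f x₀ A H).2.2))
  invFun Hv := fun p => Hv.1.1 p + (if p.2 = (f x₀ A Hv.1.1).2.1 then Hv.2 else 0)
  left_inv H := by
    set v := H ((f x₀ A H).1, (f x₀ A H).2.1) + H ((f x₀ A H).1, (f x₀ A H).2.2) with hv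
    have hfH' : f x₀ A (fun p => H p + (if p.2 = (f x₀ A H).2.1 then v else 0))
        = f x₀ A H := f_shift x₀ A H (fun y => if y = (f x₀ A H).2.1 then v else 0)
    show (fun p => (fun q => H q + (if q.2 = (f x₀ A H).2.1 then v else 0)) p
        + (if p.2 = (f x₀ A
            (fun q => H q + (if q.2 = (f x₀ A H).2.1 then v else 0))).2.1 then v else 0)) = H
    rw [hfH']
    funext p
    exact h2 (H p) _
  right_inv := by
    rintro ⟨⟨H, hH⟩, v⟩
    have hfG : f x₀ A (fun p => H p + (if p.2 = (f x₀ A H).2.1 then v else 0))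
        = f x₀ A H := f_shift x₀ A H (fun y => if y = (f x₀ A H).2.1 then v else 0)
    have hne : (f x₀ A H).2.1 ≠ (f x₀ A H).2.2 := hdist _
    set G : X × Y → Fin b → ZMod 2 :=
      fun p => H p + (if p.2 = (f x₀ A H).2.1 then v else 0) with hG
    have hdefect : G ((f x₀ A G).1, (f x₀ A G).2.1) + G ((f x₀ A G).1, (f x₀ A G).2.2) = v := by
      rw [hG] at hfG ⊢
      rw [hfG]
      show (H ((f x₀ A H).1, (f x₀ A H).2.1)
            + (if (f x₀ A H).2.1 = (f x₀ A H).2.1 then v else 0))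
          + (H ((f x₀ A H).1, (f x₀ A H).2.2)
            + (if (f x₀ A H).2.2 = (f x₀ A H).2.1 then v else 0)) = v
      rw [if_pos rfl, if_neg (Ne.symm hne), add_zero]
      have hH' : H ((f x₀ A H).1, (f x₀ A H).2.1) = H ((f x₀ A H).1, (f x₀ A H).2.2) := hH
      rw [hH']
      exact h3 _ _
    refine Prod.ext (Subtype.ext ?_) ?_
    · show (fun p => G p + (if p.2 = (f x₀ A G).2.1 then
          (G ((f x₀ A G).1, (f x₀ A G).2.1) + G ((f x₀ A G).1, (f x₀ A G).2.2)) else 0)) = H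
      funext p
      rw [hdefect, hfG]
      exact h2 (H p) _
    · exact hdefect

lemma card_eq {X Y : Type} [Fintype X] [Fintype Y] {b : ℕ} (x₀ : X)
    (A : (X × Y → (Fin b → ZMod 2)) → X × Y × Y)
    (hdist : ∀ T, (A T).2.1 ≠ (A T).2.2) :
    Nat.card {H : X × Y → Fin b → ZMod 2 // P x₀ A H} * 2 ^ b
      = Nat.card (X × Y → Fin b → ZMod 2) := by
  classical
  have := Nat.card_congr (e x₀ A hdist)
  rw [Nat.card_prod] at this
  have hV : Nat.card (Fin b → ZMod 2) = 2 ^ b := by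
    simp [Nat.card_eq_fintype_card]
  rw [hV] at this
  omega

end MaskedAux

/-- Under masking with a uniformly random function `H : X × Y → {0,1}^b`
(tokens as `Fin b → ZMod 2`, `+` is XOR, `x₀` the distinguished `0`-element),
an adversary `A` that observes the masked tokens `T(x,y) = H(x,y) ⊕ H(x₀,y)`
and then outputs `(x̂, ŷ, ŷ')` with `ŷ ≠ ŷ'` satisfies
`P[H(x̂,ŷ) = H(x̂,ŷ')] = 2⁻ᵇ` exactly, regardless of its strategy. -/
theorem masked_collision_probability_exact (X Y : Type) [Fintype X] [Fintype Y]
    (b : ℕ) (x₀ : X)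
    (A : (X × Y → (Fin b → ZMod 2)) → X × Y × Y)
    (hdist : ∀ T, (A T).2.1 ≠ (A T).2.2) :
    (Nat.card {H : X × Y → (Fin b → ZMod 2) //
        H ((A (fun p => H p + H (x₀, p.2))).1,
           (A (fun p => H p + H (x₀, p.2))).2.1) =
        H ((A (fun p => H p + H (x₀, p.2))).1,
           (A (fun p => H p + H (x₀, p.2))).2.2)} : ℝ) /
      (Nat.card (X × Y → (Fin b → ZMod 2)) : ℝ) = ((2 : ℝ) ^ b)⁻¹ := by
  classical
  have hc := MaskedAux.card_eq x₀ A hdist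
  have hNpos : 0 < Nat.card {H : X × Y → Fin b → ZMod 2 // MaskedAux.P x₀ A H} := by
    haveI : Nonempty {H : X × Y → Fin b → ZMod 2 // MaskedAux.P x₀ A H} :=
      ⟨⟨fun _ => 0, rfl⟩⟩
    exact Nat.card_pos
  show (Nat.card {H : X × Y → Fin b → ZMod 2 // MaskedAux.P x₀ A H} : ℝ) /
      (Nat.card (X × Y → (Fin b → ZMod 2)) : ℝ) = ((2 : ℝ) ^ b)⁻¹
  rw [← hc]
  push_cast
  have hN : (Nat.card {H : X × Y → Fin b → ZMod 2 // MaskedAux.P x₀ A H} : ℝ) ≠ 0 := by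
    exact_mod_cast hNpos.ne'
  rw [div_mul_eq_div_div, div_self hN, one_div]
end
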